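/- Let b, c ∈ ℂ∖{0} and a₀ ∈ ℂ, and let λ ∈ ℂ with λ ∉ a(S¹) for a(z) = a₀ + cz + bz^{-1}. Then the winding number of z ↦ a(z) − λ around 0 along S¹ equals (number of roots of c z² + (a₀−λ)z + b inside the open unit disk) − 1. -/

import Mathlib

open Complex Metric Polynomial

lemma circleInt_inv_out {w : ℂ} (hw : w ∉ closedBall (0:ℂ) 1) :
    (∮ z in C(0, 1), (z - w)⁻¹) = 0 := by
  apply Complex.circleIntegral_eq_zero_of_differentiable_on_off_countable zero_le_one
    (Set.countable_empty) (s := ∅)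
  · intro z hz
    apply ContinuousAt.continuousWithinAt
    exact (continuous_id.sub continuous_const).continuousAt.inv₀
      (sub_ne_zero.2 (fun h => hw (by simp only [id_eq] at h; exact h ▸ hz)))
  · intro z hz
    exact ((differentiable_id.sub_const w).differentiableAt).inv
      (sub_ne_zero.2 (fun h => hw (h ▸ ball_subset_closedBall hz.1)))

lemma quad_factor (a₀ b c lam : ℂ) (hc : c ≠ 0) (p : Polynomial ℂ)
    (hp : p = Polynomial.C c * Polynomial.X ^ 2 +
      Polynomial.C (a₀ - lam) * Polynomial.X + Polynomial.C b) :
    ∃ z1 z2, p.roots = {z1, z2} ∧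
      ∀ z : ℂ, c * z ^ 2 + (a₀ - lam) * z + b = c * (z - z1) * (z - z2) := by
  have hdeg : p.natDegree = 2 := by subst hp; compute_degree!
  have hlc : p.leadingCoeff = c := by
    rw [Polynomial.leadingCoeff, hdeg, hp]
    simp [coeff_add, coeff_C_mul, coeff_X_pow, coeff_C]
  have hsplit : Splits p := IsAlgClosed.splits p
  have hcard : Multiset.card p.roots = 2 := by
    rw [Polynomial.splits_iff_card_roots.mp hsplit, hdeg]
  obtain ⟨z1, z2, hz⟩ := Multiset.card_eq_two.mp hcard
  refine ⟨z1, z2, hz, fun z => ?_⟩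
  have hfac := hsplit.eq_prod_roots
  rw [hz, hlc] at hfac
  have := congrArg (Polynomial.eval z) hfac
  rw [hp] at this
  simpa [Polynomial.eval_mul, mul_assoc] using this

lemma circleInt_add {f g : ℂ → ℂ} {c : ℂ} {R : ℝ} (hf : CircleIntegrable f c R)
    (hg : CircleIntegrable g c R) :
    (∮ z in C(c, R), (f z + g z)) = (∮ z in C(c, R), f z) + ∮ z in C(c, R), g z := by
  simp only [circleIntegral, smul_add, intervalIntegral.integral_add hf.out hg.out]

/-- For the tridiagonal symbol `a(z) = a₀ + cz + bz⁻¹` and `λ ∉ a(S¹)`, the winding number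
of `a − λ` along the unit circle equals the number of roots (with multiplicity) of the
quadratic `cz² + (a₀−λ)z + b` inside the open unit disk, minus one. -/
theorem winding_number_eq_roots_in_disk_sub_one
    (a₀ b c : ℂ) (hb : b ≠ 0) (hc : c ≠ 0)
    (a : ℂ → ℂ) (ha : ∀ z, a z = a₀ + c * z + b * z⁻¹)
    (lam : ℂ) (hlam : lam ∉ a '' (sphere (0 : ℂ) 1))
    (p : Polynomial ℂ) (hp : p = Polynomial.C c * Polynomial.X ^ 2 +
      Polynomial.C (a₀ - lam) * Polynomial.X + Polynomial.C b) :
    (2 * Real.pi * Complex.I)⁻¹ * (∮ z in C(0, 1), deriv a z / (a z - lam)) =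
      ((p.roots.filter (fun z => ‖z‖ < 1)).card : ℂ) - 1 := by
  obtain ⟨z1, z2, hroots, hfac⟩ := quad_factor a₀ b c lam hc p hp
  have hb' : b = c * z1 * z2 := by linear_combination hfac 0
  -- roots are not on the unit circle
  have hnot : ∀ w : ℂ, c * w ^ 2 + (a₀ - lam) * w + b = 0 → ‖w‖ ≠ 1 := by
    intro w hw habs
    have hw0 : w ≠ 0 := by
      intro h; rw [h] at habs; simp at habs
    apply hlam
    refine ⟨w, by simp [mem_sphere_iff_norm, habs], ?_⟩
    rw [ha w]
    field_simp
    linear_combination hw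
  have h1ne : ‖z1‖ ≠ 1 := hnot z1 (by rw [hfac z1]; ring)
  have h2ne : ‖z2‖ ≠ 1 := hnot z2 (by rw [hfac z2]; ring)
  -- integrand equality on the sphere
  have heq : Set.EqOn (fun z => deriv a z / (a z - lam))
      (fun z => (z - z1)⁻¹ + (z - z2)⁻¹ - (z - 0)⁻¹) (sphere (0:ℂ) 1) := by
    intro z hz
    have hzabs : ‖z‖ = 1 := by simpa [mem_sphere_iff_norm] using hz
    have hz0 : z ≠ 0 := by intro h; rw [h] at hzabs; simp at hzabs
    have hz1 : z ≠ z1 := by intro h; rw [← h] at h1ne; exact h1ne hzabs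
    have hz2 : z ≠ z2 := by intro h; rw [← h] at h2ne; exact h2ne hzabs
    -- derivative of a at z
    have hda : deriv a z = c - b / z ^ 2 := by
      have h1 : HasDerivAt (fun w : ℂ => a₀ + c * w + b * w⁻¹)
          (0 + c * 1 + b * (-(z ^ 2)⁻¹)) z :=
        ((hasDerivAt_const z a₀).add ((hasDerivAt_id z).const_mul c)).add
          ((hasDerivAt_inv hz0).const_mul b)
      have h2 : a = fun w : ℂ => a₀ + c * w + b * w⁻¹ := funext ha
      rw [h2]
      rw [h1.deriv]
      field_simp
      ring
    have haz : a z - lam = c * (z - z1) * (z - z2) / z := by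
      rw [ha z]
      field_simp
      linear_combination hfac z
    have hne1 : z - z1 ≠ 0 := sub_ne_zero.2 hz1
    have hne2 : z - z2 ≠ 0 := sub_ne_zero.2 hz2
    simp only [hda, haz, sub_zero]
    rw [div_div_eq_mul_div, hb']
    field_simp
    ring
  rw [circleIntegral.integral_congr zero_le_one heq]
  -- integrability
  have hint : ∀ w : ℂ, ‖w‖ ≠ 1 →
      CircleIntegrable (fun z => (z - w)⁻¹) 0 1 := by
    intro w hw
    rw [circleIntegrable_sub_inv_iff]
    right
    simp [mem_sphere_iff_norm, abs_one, hw]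
  have hi1 := hint z1 h1ne
  have hi2 := hint z2 h2ne
  have hi0 := hint 0 (by simp)
  have hi0' : CircleIntegrable (fun z : ℂ => -(z - 0)⁻¹) 0 1 := hi0.neg
  have e1 : (∮ z in C(0, 1), ((z - z1)⁻¹ + (z - z2)⁻¹ - (z - 0)⁻¹)) =
      (∮ z in C(0, 1), ((z - z1)⁻¹ + (z - z2)⁻¹)) - ∮ z in C(0, 1), ((z:ℂ) - 0)⁻¹ :=
    circleIntegral.integral_sub (hi1.add hi2) hi0
  have e2 : (∮ z in C(0, 1), ((z - z1)⁻¹ + (z - z2)⁻¹)) =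
      (∮ z in C(0, 1), ((z:ℂ) - z1)⁻¹) + ∮ z in C(0, 1), ((z:ℂ) - z2)⁻¹ :=
    circleInt_add hi1 hi2
  rw [e1, e2]
  have h0int : (∮ z in C(0, 1), ((z : ℂ) - 0)⁻¹) = 2 * Real.pi * Complex.I :=
    circleIntegral.integral_sub_inv_of_mem_ball (by simp)
  have hval : ∀ w : ℂ, ‖w‖ ≠ 1 → (∮ z in C(0, 1), ((z : ℂ) - w)⁻¹) =
      if ‖w‖ < 1 then 2 * Real.pi * Complex.I else 0 := by
    intro w hw
    by_cases h : ‖w‖ < 1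
    · rw [if_pos h]
      exact circleIntegral.integral_sub_inv_of_mem_ball (by simpa [mem_ball_zero_iff] using h)
    · rw [if_neg h]
      refine circleInt_inv_out ?_
      simp only [mem_closedBall_zero_iff, not_le]
      rcases lt_or_gt_of_ne hw with h' | h'
      · exact absurd h' h
      · exact h'
  rw [hval z1 h1ne, hval z2 h2ne, h0int]
  -- count the roots
  have hcount : ((p.roots.filter (fun z => ‖z‖ < 1)).card : ℂ) =
      (if ‖z1‖ < 1 then 1 else 0) + (if ‖z2‖ < 1 then 1 else 0) := by
    rw [hroots]
    show ((Multiset.filter _ (z1 ::ₘ {z2})).card : ℂ) = _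
    rw [Multiset.filter_cons, Multiset.filter_singleton]
    by_cases h1 : ‖z1‖ < 1 <;> by_cases h2 : ‖z2‖ < 1 <;>
      simp [h1, h2] <;> norm_num
  rw [hcount]
  have h2pi : (2 * (Real.pi : ℂ) * Complex.I) ≠ 0 := by
    simp [Real.pi_ne_zero, Complex.I_ne_zero]
  by_cases h1 : ‖z1‖ < 1 <;> by_cases h2 : ‖z2‖ < 1
  · simp only [if_pos h1, if_pos h2]
    field_simp
  · simp only [if_pos h1, if_neg h2]
    field_simp
    ring
  · simp only [if_neg h1, if_pos h2]
    field_simp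
    ring
  · simp only [if_neg h1, if_neg h2]
    field_simp
    ring
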